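/- If a node expression of the form ψ ∧ i:⟨a⟩χ is satisfiable and j is a nominal occurring neither in ψ nor in i:⟨a⟩χ, then (ψ ∧ i:⟨a⟩χ) ∧ i:⟨a⟩j ∧ j:χ is satisfiable; conversely, satisfiability of the latter implies satisfiability of the former. -/

import Mathlib

mutual
inductive PathE (P I A C : Type) : Type
  | atom (a : A)
  | jump (i : I)
  | test (φ : NodeE P I A C)
  | comp (α β : PathE P I A C)
  | union (α β : PathE P I A C)
inductive NodeE (P I A C : Type) : Type
  | prop (p : P)
  | nom (i : I)
  | neg (φ : NodeE P I A C)
  | and (φ ψ : NodeE P I A C)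
  | at (i : I) (φ : NodeE P I A C)
  | dia (a : A) (φ : NodeE P I A C)
  | cmp (b : Bool) (c : C) (α β : PathE P I A C)
end

structure HModel (P I A C : Type) where
  N : Type
  ne : Nonempty N
  R : A → N → N → Prop
  E : C → N → N → Prop
  equiv : ∀ c, Equivalence (E c)
  V : P → N → Prop
  g : I → N

mutual
def psat {P I A C : Type} (M : HModel P I A C) : PathE P I A C → M.N → M.N → Prop
  | .atom a, n, n' => M.R a n n'
  | .jump i, _, n' => M.g i = n'
  | .test φ, n, n' => n = n' ∧ nsat M φ n
  | .comp α β, n, n' => ∃ z, psat M α n z ∧ psat M β z n'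
  | .union α β, n, n' => psat M α n n' ∨ psat M β n n'
def nsat {P I A C : Type} (M : HModel P I A C) : NodeE P I A C → M.N → Prop
  | .prop p, n => M.V p n
  | .nom i, n => M.g i = n
  | .neg φ, n => ¬ nsat M φ n
  | .and φ ψ, n => nsat M φ n ∧ nsat M ψ n
  | .at i φ, _ => nsat M φ (M.g i)
  | .dia a φ, n => ∃ z, M.R a n z ∧ nsat M φ z
  | .cmp b c α β, n => ∃ z z', psat M α n z ∧ psat M β n z' ∧ (M.E c z z' ↔ b = true)
end

mutual
def nomsP {P I A C : Type} : PathE P I A C → Set I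
  | .atom _ => ∅
  | .jump i => {i}
  | .test φ => nomsN φ
  | .comp α β => nomsP α ∪ nomsP β
  | .union α β => nomsP α ∪ nomsP β
def nomsN {P I A C : Type} : NodeE P I A C → Set I
  | .prop _ => ∅
  | .nom i => {i}
  | .neg φ => nomsN φ
  | .and φ ψ => nomsN φ ∪ nomsN ψ
  | .at i φ => {i} ∪ nomsN φ
  | .dia _ φ => nomsN φ
  | .cmp _ _ α β => nomsP α ∪ nomsP β
end

def satisfiableN {P I A C : Type} (φ : NodeE P I A C) : Prop :=
  ∃ (M : HModel P I A C) (n : M.N), nsat M φ n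

/-!
A fresh nominal `j` can be reassigned to the `a`-successor of `i` that witnesses `χ` without
changing the truth of any formula in which `j` does not occur.
-/

namespace HModel

variable {P I A C : Type}

noncomputable def updateNom (M : HModel P I A C) (j : I) (z : M.N) : HModel P I A C :=
  open Classical in { M with g := Function.update M.g j z }

variable (M : HModel P I A C) {j : I} (z : M.N)

@[simp]
theorem updateNom_g_self : (M.updateNom j z).g j = z := by
  simp [updateNom]

@[simp]
theorem updateNom_g_of_ne {k : I} (h : k ≠ j) : (M.updateNom j z).g k = M.g k := by
  simp [updateNom, h]

end HModel

open HModel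

mutual
theorem psat_updateNom_iff {P I A C : Type} (M : HModel P I A C) (j : I) (z : M.N) :
    ∀ (α : PathE P I A C), j ∉ nomsP α → ∀ n n' : M.N,
      (psat (M.updateNom j z) α n n' ↔ psat M α n n')
  | .atom _, _, _, _ => Iff.rfl
  | .jump k, hj, _, _ => by
      simp only [psat, updateNom_g_of_ne M z (show k ≠ j by rintro rfl; exact hj rfl)]
      exact Iff.rfl
  | .test φ, hj, n, _ => and_congr Iff.rfl (nsat_updateNom_iff M j z φ hj n)
  | .comp α β, hj, n, n' => by
      simp only [nomsP, Set.mem_union, not_or] at hj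
      exact exists_congr fun w => and_congr
        (psat_updateNom_iff M j z α hj.1 n w) (psat_updateNom_iff M j z β hj.2 w n')
  | .union α β, hj, n, n' => by
      simp only [nomsP, Set.mem_union, not_or] at hj
      exact or_congr (psat_updateNom_iff M j z α hj.1 n n') (psat_updateNom_iff M j z β hj.2 n n')

theorem nsat_updateNom_iff {P I A C : Type} (M : HModel P I A C) (j : I) (z : M.N) :
    ∀ (φ : NodeE P I A C), j ∉ nomsN φ → ∀ n : M.N,
      (nsat (M.updateNom j z) φ n ↔ nsat M φ n)
  | .prop _, _, _ => Iff.rfl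
  | .nom k, hj, _ => by
      simp only [nsat, updateNom_g_of_ne M z (show k ≠ j by rintro rfl; exact hj rfl)]
      exact Iff.rfl
  | .neg φ, hj, n => not_congr (nsat_updateNom_iff M j z φ hj n)
  | .and φ ψ, hj, n => by
      simp only [nomsN, Set.mem_union, not_or] at hj
      exact and_congr (nsat_updateNom_iff M j z φ hj.1 n) (nsat_updateNom_iff M j z ψ hj.2 n)
  | .at k φ, hj, _ => by
      simp only [nomsN, Set.mem_union, Set.mem_singleton_iff, not_or] at hj
      simp only [nsat]
      rw [updateNom_g_of_ne M z (Ne.symm hj.1)]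
      exact nsat_updateNom_iff M j z φ hj.2 (M.g k)
  | .dia _ φ, hj, _ => exists_congr fun w => and_congr Iff.rfl (nsat_updateNom_iff M j z φ hj w)
  | .cmp _ _ α β, hj, n => by
      simp only [nomsN, Set.mem_union, not_or] at hj
      exact exists_congr fun w => exists_congr fun w' => and_congr
        (psat_updateNom_iff M j z α hj.1 n w)
        (and_congr (psat_updateNom_iff M j z β hj.2 n w') Iff.rfl)
end

theorem satisfiableN_of_and_left {P I A C : Type} {φ ψ : NodeE P I A C}
    (h : satisfiableN (NodeE.and φ ψ)) : satisfiableN φ :=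
  let ⟨M, n, hφ, _⟩ := h
  ⟨M, n, hφ⟩

theorem stmt5 {P I A C : Type} (ψ χ : NodeE P I A C) (i j : I) (a : A)
    (hj : j ∉ nomsN (NodeE.and ψ (.at i (.dia a χ)))) :
    satisfiableN (NodeE.and ψ (.at i (.dia a χ))) ↔
      satisfiableN (NodeE.and (NodeE.and ψ (.at i (.dia a χ)))
        (.and (.at i (.dia a (.nom j))) (.at j χ))) := by
  refine ⟨?_, satisfiableN_of_and_left⟩
  rintro ⟨M, n, hφ⟩
  obtain ⟨-, z, hiz, hχ⟩ := id hφ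
  have hij : i ≠ j := fun h => hj (Or.inr (Or.inl h.symm))
  have hjχ : j ∉ nomsN χ := fun h => hj (Or.inr (Or.inr h))
  refine ⟨M.updateNom j z, n, (nsat_updateNom_iff M j z _ hj n).2 hφ, ?_, ?_⟩
  · exact ⟨z, by rwa [updateNom_g_of_ne M z hij], updateNom_g_self M z⟩
  · simp only [nsat, updateNom_g_self]
    exact (nsat_updateNom_iff M j z χ hjχ z).2 hχ
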